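/- In the setting of the previous Green-function construction, with the |·|-weight e^{-β|n|} instead of e^{-β n} (β ∈ (−α, α)): for any sequence f with sup_k K(k)e^{-β|k|}|f(k)| < ∞, the sequence x(n) = Σ_{k∈ℤ} G(n,k)f(k) converges absolutely, solves x(n+1) = A(n)x(n) + f(n+1), and satisfies sup_n e^{-β|n|}|x(n)| ≤ γ̃ · sup_k K(k)e^{-β|k|}|f(k)|, where γ̃ = (1+e^{-(α-β)})/(1-e^{-(α-β)}) if β ≥ 0 and γ̃ = (1+e^{-(α+β)})/(1-e^{-(α+β)}) if β < 0. -/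

import Mathlib

/-!
The two one-sided dichotomy estimates combine into `‖G n k‖ ≤ K k e^{-α|n-k|}`. Since
`-β|n| + β|k| ≤ |β| |n-k|`, the weighted terms satisfy
`e^{-β|n|} ‖G n k (f k)‖ ≤ M e^{-(α-|β|)|n-k|}`, and `∑_{k ∈ ℤ} e^{-δ|n-k|} = (1+e^{-δ})/(1-e^{-δ})`
gives absolute convergence and the bound. The difference equation holds termwise:
`G (n+1) k = A n ∘ G n k` for `k ≠ n+1`, while at `k = n+1` the stable part `P` of `G (n+1) (n+1)`
and the unstable part `1 - P` carried forward from `G n (n+1)` add up to the identity, which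
produces the forcing term `f (n+1)`.
-/

open Real

lemma hasSum_exp_neg_mul_abs_int {δ : ℝ} (hδ : 0 < δ) :
    HasSum (fun k : ℤ => exp (-δ * |(k : ℝ)|)) ((1 + exp (-δ)) / (1 - exp (-δ))) := by
  have hr1 : exp (-δ) < 1 := exp_lt_one_iff.mpr (by linarith)
  have hpow (m : ℕ) : exp (-δ * m) = exp (-δ) ^ m := by rw [← exp_nat_mul]; ring_nf
  have hgeom := hasSum_geometric_of_lt_one (exp_pos (-δ)).le hr1
  have hnonneg : HasSum (fun m : ℕ => exp (-δ * |((m : ℤ) : ℝ)|)) (1 - exp (-δ))⁻¹ :=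
    hgeom.congr_fun fun m => by rw [← hpow]; simp
  have hneg : HasSum (fun m : ℕ => exp (-δ * |((-(m + 1) : ℤ) : ℝ)|))
      (exp (-δ) * (1 - exp (-δ))⁻¹) :=
    (hgeom.mul_left _).congr_fun fun m => by
      rw [← pow_succ', ← hpow]
      push_cast
      rw [abs_neg, abs_of_nonneg (by positivity)]
  convert HasSum.of_nat_of_neg_add_one (f := fun k : ℤ => exp (-δ * |(k : ℝ)|)) hnonneg hneg
    using 1
  field_simp [(sub_pos.mpr hr1).ne']

lemma hasSum_exp_neg_mul_abs_sub {δ : ℝ} (hδ : 0 < δ) (n : ℤ) :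
    HasSum (fun k : ℤ => exp (-δ * |(n : ℝ) - k|)) ((1 + exp (-δ)) / (1 - exp (-δ))) := by
  convert (Equiv.subLeft n).hasSum_iff.mpr (hasSum_exp_neg_mul_abs_int hδ) using 2 with k
  simp

lemma mul_abs_sub_mul_abs_le (β a b : ℝ) : β * |b| - β * |a| ≤ |β| * |a - b| :=
  calc β * |b| - β * |a| ≤ |β * (|b| - |a|)| := by rw [mul_sub]; exact le_abs_self _
    _ = |β| * |(|b| - |a|)| := abs_mul _ _
    _ ≤ |β| * |a - b| := by
      rw [abs_sub_comm a b]
      exact mul_le_mul_of_nonneg_left (abs_abs_sub_abs_le_abs_sub b a) (abs_nonneg β)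

lemma ite_nonneg_sub_add_eq_sub_abs (g : ℝ → ℝ) (α β : ℝ) :
    (if 0 ≤ β then g (α - β) else g (α + β)) = g (α - |β|) := by
  split_ifs with h
  · rw [abs_of_nonneg h]
  · rw [abs_of_neg (not_le.mp h), sub_neg_eq_add]

section Green

variable {X : Type*} [NormedAddCommGroup X] [NormedSpace ℝ X]
  {A : ℤ → X →L[ℝ] X} {U : ℤ → ℤ → X →L[ℝ] X} {P : ℤ → X →L[ℝ] X} {G : ℤ → ℤ → X →L[ℝ] X}
  (hGs : ∀ n m : ℤ, m ≤ n → G n m = (U n m).comp (P m))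
  (hGu : ∀ n m : ℤ, n < m → G n m = -((U n m).comp (1 - P m)))
include hGs hGu

lemma norm_green_le {α : ℝ} {K : ℤ → ℝ}
    (hs : ∀ n m : ℤ, m ≤ n →
      ‖(U n m).comp (P m)‖ ≤ K m * exp (-α * ((n : ℝ) - (m : ℝ))))
    (hu : ∀ n m : ℤ, n ≤ m →
      ‖(U n m).comp (1 - P m)‖ ≤ K m * exp (-α * ((m : ℝ) - (n : ℝ)))) (n k : ℤ) :
    ‖G n k‖ ≤ K k * exp (-α * |(n : ℝ) - k|) := by
  rcases le_or_gt k n with h | h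
  · have hkn : (k : ℝ) ≤ n := by exact_mod_cast h
    rw [hGs n k h, abs_of_nonneg (sub_nonneg.mpr hkn)]
    exact hs n k h
  · have hnk : (n : ℝ) ≤ k := by exact_mod_cast h.le
    rw [hGu n k h, norm_neg, abs_of_nonpos (sub_nonpos.mpr hnk), neg_sub]
    exact hu n k h.le

variable (hback : ∀ n m : ℤ, n < m →
  (A n).comp ((U n m).comp (1 - P m)) = (U (n + 1) m).comp (1 - P m))
include hback

lemma green_succ_of_ne (hUstep : ∀ n m : ℤ, m ≤ n → U (n + 1) m = (A n).comp (U n m))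
    {n k : ℤ} (hk : k ≠ n + 1) :
    G (n + 1) k = (A n).comp (G n k) := by
  rcases hk.lt_or_gt with hk | hk
  · have hkn : k ≤ n := Int.lt_add_one_iff.mp hk
    rw [hGs _ _ hk.le, hGs n k hkn, hUstep n k hkn, ContinuousLinearMap.comp_assoc]
  · rw [hGu _ _ hk, hGu n k (by omega), ContinuousLinearMap.comp_neg, hback n k (by omega)]

lemma green_succ_self (hU0 : ∀ m : ℤ, U m m = 1) (n : ℤ) :
    G (n + 1) (n + 1) = (A n).comp (G n (n + 1)) + 1 := by
  rw [hGs _ _ le_rfl, hGu n _ (lt_add_one n), ContinuousLinearMap.comp_neg,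
    hback n _ (lt_add_one n), hU0, ContinuousLinearMap.one_def, ContinuousLinearMap.id_comp,
    ContinuousLinearMap.id_comp]
  abel

lemma HasSum.green_succ {f : ℤ → X} {x : X} (hU0 : ∀ m : ℤ, U m m = 1)
    (hUstep : ∀ n m : ℤ, m ≤ n → U (n + 1) m = (A n).comp (U n m)) {n : ℤ}
    (h : HasSum (fun k : ℤ => G n k (f k)) x) :
    HasSum (fun k : ℤ => G (n + 1) k (f k)) (A n x + f (n + 1)) := by
  refine ((h.mapL (A n)).add (hasSum_ite_eq (n + 1) (f (n + 1)))).congr_fun fun k => ?_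
  by_cases hk : k = n + 1
  · subst hk
    simp [green_succ_self hGs hGu hback hU0]
  · simp [green_succ_of_ne hGs hGu hback hUstep hk, hk]

end Green

section WeightedBound

variable {X : Type*} [NormedAddCommGroup X] [NormedSpace ℝ X] {G : ℤ → ℤ → X →L[ℝ] X}
  {α β : ℝ} {K : ℤ → ℝ} {f : ℤ → X} {M : ℝ}

lemma exp_mul_norm_green_apply_le (hG : ∀ n k : ℤ, ‖G n k‖ ≤ K k * exp (-α * |(n : ℝ) - k|))
    (hf : ∀ k : ℤ, K k * exp (-β * |(k : ℝ)|) * ‖f k‖ ≤ M) (hM : 0 ≤ M) (n k : ℤ) :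
    exp (-β * |(n : ℝ)|) * ‖G n k (f k)‖ ≤ M * exp (-(α - |β|) * |(n : ℝ) - k|) := by
  set t := |(n : ℝ) - k|
  have hGf : ‖G n k (f k)‖ ≤ exp (β * |(k : ℝ)| - α * t) * M :=
    calc ‖G n k (f k)‖ ≤ K k * exp (-α * t) * ‖f k‖ :=
          (G n k).le_of_opNorm_le (hG n k) (f k)
      _ = exp (β * |(k : ℝ)| - α * t) * (K k * exp (-β * |(k : ℝ)|) * ‖f k‖) := by
          rw [show exp (-α * t) = exp (β * |(k : ℝ)| - α * t) * exp (-β * |(k : ℝ)|) by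
            rw [← exp_add]; ring_nf]
          ring
      _ ≤ exp (β * |(k : ℝ)| - α * t) * M := mul_le_mul_of_nonneg_left (hf k) (exp_pos _).le
  calc exp (-β * |(n : ℝ)|) * ‖G n k (f k)‖
      ≤ exp (-β * |(n : ℝ)|) * (exp (β * |(k : ℝ)| - α * t) * M) :=
        mul_le_mul_of_nonneg_left hGf (exp_pos _).le
    _ = M * exp (β * |(k : ℝ)| - β * |(n : ℝ)| - α * t) := by
        rw [mul_comm M, ← mul_assoc, ← exp_add]; ring_nf
    _ ≤ M * exp (-(α - |β|) * t) := by
        gcongr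
        linarith [mul_abs_sub_mul_abs_le β n k]

variable (hG : ∀ n k : ℤ, ‖G n k‖ ≤ K k * exp (-α * |(n : ℝ) - k|))
  (hf : ∀ k : ℤ, K k * exp (-β * |(k : ℝ)|) * ‖f k‖ ≤ M) (hM : 0 ≤ M) (hβ : |β| < α)
include hG hf hM hβ

lemma summable_norm_green_apply (n : ℤ) : Summable fun k : ℤ => ‖G n k (f k)‖ := by
  refine .of_nonneg_of_le (fun k => norm_nonneg _) (fun k => ?_)
    (((hasSum_exp_neg_mul_abs_sub (sub_pos.mpr hβ) n).summable.mul_left M).mul_left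
      (exp (β * |(n : ℝ)|)))
  have h := mul_le_mul_of_nonneg_left (exp_mul_norm_green_apply_le hG hf hM n k)
    (exp_pos (β * |(n : ℝ)|)).le
  rwa [← mul_assoc, ← exp_add, neg_mul, add_neg_cancel, exp_zero, one_mul] at h

lemma exp_mul_norm_tsum_green_apply_le (n : ℤ) :
    exp (-β * |(n : ℝ)|) * ‖∑' k : ℤ, G n k (f k)‖ ≤
      (1 + exp (-(α - |β|))) / (1 - exp (-(α - |β|))) * M := by
  have hsum := hasSum_exp_neg_mul_abs_sub (sub_pos.mpr hβ) n
  have hnorm := summable_norm_green_apply hG hf hM hβ n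
  calc exp (-β * |(n : ℝ)|) * ‖∑' k : ℤ, G n k (f k)‖
      ≤ ∑' k : ℤ, exp (-β * |(n : ℝ)|) * ‖G n k (f k)‖ := by
        rw [tsum_mul_left]
        exact mul_le_mul_of_nonneg_left (norm_tsum_le_tsum_norm hnorm) (exp_pos _).le
    _ ≤ ∑' k : ℤ, M * exp (-(α - |β|) * |(n : ℝ) - k|) :=
        (hnorm.mul_left _).tsum_le_tsum (exp_mul_norm_green_apply_le hG hf hM n)
          (hsum.summable.mul_left M)
    _ = (1 + exp (-(α - |β|))) / (1 - exp (-(α - |β|))) * M := by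
        rw [tsum_mul_left, hsum.tsum_eq, mul_comm]

end WeightedBound

theorem stmt_5_general {X : Type*} [NormedAddCommGroup X] [NormedSpace ℝ X] [CompleteSpace X]
    (A : ℤ → X →L[ℝ] X) (U : ℤ → ℤ → X →L[ℝ] X) (P : ℤ → X →L[ℝ] X)
    (G : ℤ → ℤ → X →L[ℝ] X)
    (α β : ℝ) (K : ℤ → ℝ)
    (hβ : |β| < α)
    (hU0 : ∀ m : ℤ, U m m = 1)
    (hUstep : ∀ n m : ℤ, m ≤ n → U (n + 1) m = (A n).comp (U n m))
    (hs : ∀ n m : ℤ, m ≤ n →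
      ‖(U n m).comp (P m)‖ ≤ K m * Real.exp (-α * ((n : ℝ) - (m : ℝ))))
    (hu : ∀ n m : ℤ, n ≤ m →
      ‖(U n m).comp (1 - P m)‖ ≤ K m * Real.exp (-α * ((m : ℝ) - (n : ℝ))))
    (hback : ∀ n m : ℤ, n < m →
      (A n).comp ((U n m).comp (1 - P m)) = (U (n + 1) m).comp (1 - P m))
    (hGs : ∀ n m : ℤ, m ≤ n → G n m = (U n m).comp (P m))
    (hGu : ∀ n m : ℤ, n < m → G n m = -((U n m).comp (1 - P m)))
    (f : ℤ → X) (M : ℝ)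
    (hf : ∀ k : ℤ, K k * Real.exp (-β * |(k : ℝ)|) * ‖f k‖ ≤ M) :
    (∀ n : ℤ, Summable fun k : ℤ => ‖G n k (f k)‖) ∧
    (∀ n : ℤ, (∑' k : ℤ, G (n + 1) k (f k)) = A n (∑' k : ℤ, G n k (f k)) + f (n + 1)) ∧
    (∀ n : ℤ, Real.exp (-β * |(n : ℝ)|) * ‖∑' k : ℤ, G n k (f k)‖ ≤
      (if 0 ≤ β then (1 + Real.exp (-(α - β))) / (1 - Real.exp (-(α - β)))
        else (1 + Real.exp (-(α + β))) / (1 - Real.exp (-(α + β)))) * M) := by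
  have hG := norm_green_le hGs hGu hs hu
  have hK0 : 0 ≤ K 0 := nonneg_of_mul_nonneg_left ((norm_nonneg _).trans (hG 0 0)) (exp_pos _)
  have hM : 0 ≤ M := (mul_nonneg (mul_nonneg hK0 (exp_pos _).le) (norm_nonneg _)).trans (hf 0)
  have hsum := summable_norm_green_apply hG hf hM hβ
  refine ⟨hsum, fun n => ?_, fun n => ?_⟩
  · exact ((hsum n).of_norm.hasSum.green_succ hGs hGu hback hU0 hUstep).tsum_eq
  · convert exp_mul_norm_tsum_green_apply_le hG hf hM hβ n using 2
    exact ite_nonneg_sub_add_eq_sub_abs (fun δ => (1 + exp (-δ)) / (1 - exp (-δ))) α β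

/-- as in the Green-function construction, but with the weight `e^{-β|n|}`:
for any `β ∈ (-α,α)` and input `f` with `sup_k K(k)e^{-β|k|}‖f(k)‖ ≤ M`, the series
`x(n) = Σ_k G(n,k)f(k)` converges absolutely, solves `x(n+1) = A(n)x(n) + f(n+1)`,
and satisfies `e^{-β|n|}‖x(n)‖ ≤ γ̃ M` where `γ̃ = (1+e^{-(α-β)})/(1-e^{-(α-β)})`
if `β ≥ 0` and `γ̃ = (1+e^{-(α+β)})/(1-e^{-(α+β)})` if `β < 0`. -/
theorem stmt_5 {X : Type*} [NormedAddCommGroup X] [NormedSpace ℝ X] [CompleteSpace X]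
    (A : ℤ → X →L[ℝ] X) (U : ℤ → ℤ → X →L[ℝ] X) (P : ℤ → X →L[ℝ] X)
    (G : ℤ → ℤ → X →L[ℝ] X)
    (α β : ℝ) (K : ℤ → ℝ)
    (hα : 0 < α) (hβ : |β| < α) (hK : ∀ n, 0 < K n)
    (hU0 : ∀ m : ℤ, U m m = 1)
    (hUstep : ∀ n m : ℤ, m ≤ n → U (n + 1) m = (A n).comp (U n m))
    (hproj : ∀ n : ℤ, (P n).comp (P n) = P n)
    (hcomm : ∀ n : ℤ, (P (n + 1)).comp (A n) = (A n).comp (P n))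
    (hs : ∀ n m : ℤ, m ≤ n →
      ‖(U n m).comp (P m)‖ ≤ K m * Real.exp (-α * ((n : ℝ) - (m : ℝ))))
    (hu : ∀ n m : ℤ, n ≤ m →
      ‖(U n m).comp (1 - P m)‖ ≤ K m * Real.exp (-α * ((m : ℝ) - (n : ℝ))))
    (hinv : ∀ n m : ℤ, n ≤ m → (U n m).comp ((1 - P m).comp (U m n)) = 1 - P n)
    (hback : ∀ n m : ℤ, n < m →
      (A n).comp ((U n m).comp (1 - P m)) = (U (n + 1) m).comp (1 - P m))
    (hGs : ∀ n m : ℤ, m ≤ n → G n m = (U n m).comp (P m))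
    (hGu : ∀ n m : ℤ, n < m → G n m = -((U n m).comp (1 - P m)))
    (f : ℤ → X) (M : ℝ)
    (hf : ∀ k : ℤ, K k * Real.exp (-β * |(k : ℝ)|) * ‖f k‖ ≤ M) :
    (∀ n : ℤ, Summable fun k : ℤ => ‖G n k (f k)‖) ∧
    (∀ n : ℤ, (∑' k : ℤ, G (n + 1) k (f k)) = A n (∑' k : ℤ, G n k (f k)) + f (n + 1)) ∧
    (∀ n : ℤ, Real.exp (-β * |(n : ℝ)|) * ‖∑' k : ℤ, G n k (f k)‖ ≤
      (if 0 ≤ β then (1 + Real.exp (-(α - β))) / (1 - Real.exp (-(α - β)))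
        else (1 + Real.exp (-(α + β))) / (1 - Real.exp (-(α + β)))) * M) :=
  stmt_5_general A U P G α β K hβ hU0 hUstep hs hu hback hGs hGu f M hf
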